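/- arXiv:2002.11715 — 2 statements merged into one kernel-verified Lean document; each statement's English description precedes it below -/
import Mathlib

section
/- Let m be a prime, and let G₁, G₂ be connected m-uniform hypergraphs on n₁, n₂ vertices whose incidence matrices over the field ℤ/mℤ have ranks r₁, r₂ respectively. Then s(G₁ □ G₂) = m^{(n₁−r₁)(n₂−r₂)−1}. -/
open Matrix

/-- An `m`-uniform hypergraph on the vertex type `V`. -/
structure HG (m : ℕ) (V : Type) where
  edges : Finset (Finset V)
  uniform : ∀ e ∈ edges, e.card = m

namespace HG

variable {m : ℕ} {V : Type}

/-- Two vertices are adjacent if they are distinct and some edge contains both. -/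
def adj (G : HG m V) (u v : V) : Prop :=
  u ≠ v ∧ ∃ e ∈ G.edges, u ∈ e ∧ v ∈ e

/-- A hypergraph is connected if every two vertices are joined by a walk. -/
def Connected (G : HG m V) : Prop :=
  ∀ u v : V, Relation.ReflTransGen G.adj u v

/-- The incidence matrix of `G` over `ZMod m`: rows are edges, columns are vertices,
entry `1` iff the vertex lies in the edge. -/
def inc [DecidableEq V] (G : HG m V) : Matrix {e // e ∈ G.edges} V (ZMod m) :=
  Matrix.of fun e v => if v ∈ e.1 then 1 else 0

/-- The stabilizing index of `G` with respect to a base vertex `v₀`: the number of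
solutions `x` of `In(G)·x = 0` over `ZMod m` with `x v₀ = 0`. -/
noncomputable def stabIndex [DecidableEq V] [Fintype V] (G : HG m V) (v₀ : V) : ℕ :=
  Nat.card {x : V → ZMod m // G.inc.mulVec x = 0 ∧ x v₀ = 0}

/-- The cyclic index of `G`: the largest divisor `ℓ` of `m` such that `G` has an
`(m,ℓ)`-coloring, i.e. a vertex labelling whose sum on each edge is `m/ℓ` mod `m`. -/
noncomputable def cyclicIndex (G : HG m V) : ℕ :=
  sSup {ℓ : ℕ | ℓ ∣ m ∧ ∃ x : V → ZMod m, ∀ e ∈ G.edges, ∑ v ∈ e, x v = ((m / ℓ : ℕ) : ZMod m)}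

end HG

/-- The Cartesian product of two `m`-uniform hypergraphs: an edge is an edge of one
factor in one coordinate, with the other coordinate held constant. -/
def cartProd {m : ℕ} {V₁ V₂ : Type} [DecidableEq V₁] [DecidableEq V₂] [Fintype V₁] [Fintype V₂]
    (G₁ : HG m V₁) (G₂ : HG m V₂) : HG m (V₁ × V₂) where
  edges :=
    (Finset.univ : Finset V₁).biUnion
        (fun u => G₂.edges.image (Finset.image (fun v => (u, v)))) ∪
      (Finset.univ : Finset V₂).biUnion
        (fun v => G₁.edges.image (Finset.image (fun u => (u, v))))
  uniform := by
    intro e he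
    simp only [Finset.mem_union, Finset.mem_biUnion, Finset.mem_image, Finset.mem_univ,
      true_and] at he
    rcases he with ⟨u, f, hf, rfl⟩ | ⟨v, f, hf, rfl⟩
    · rw [Finset.card_image_of_injective _ (fun a b hab => by simpa using hab)]
      exact G₂.uniform f hf
    · rw [Finset.card_image_of_injective _ (fun a b hab => by simpa using hab)]
      exact G₁.uniform f hf

/-!
Over the field `ZMod m`, the kernel of `In(G)` is the space of vertex labellings summing to `0`
on every edge; we allow labels in any module `M`. A labelling of `G₁ □ G₂` is such a labelling
exactly when each row is one for `G₂` and each column one for `G₁`, i.e. it is a labelling of `G₁`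
with values in `ker In(G₂) ≅ (ZMod m)^(n₂ - r₂)`; hence `ker In(G₁ □ G₂)` has dimension
`(n₁ - r₁)(n₂ - r₂)`. By `m`-uniformity the constant labellings lie in every kernel, so evaluation
at the base vertex is onto `ZMod m`, and the solutions vanishing there form a hyperplane.
-/

namespace HG

variable {m : ℕ} {V : Type}

def zeroSum (R M : Type*) [Semiring R] [AddCommMonoid M] [Module R M] (G : HG m V) :
    Submodule R (V → M) where
  carrier := {z | ∀ e ∈ G.edges, ∑ v ∈ e, z v = 0}
  add_mem' hz hy e he := by simp only [Pi.add_apply, Finset.sum_add_distrib, hz e he, hy e he,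
    add_zero]
  zero_mem' _ _ := by simp
  smul_mem' c z hz e he := by simp only [Pi.smul_apply, ← Finset.smul_sum, hz e he, smul_zero]

section Coefficients

variable {R M N : Type*} [Semiring R] [AddCommMonoid M] [Module R M] [AddCommMonoid N]
  [Module R N] (G : HG m V)

@[simp]
theorem mem_zeroSum {z : V → M} : z ∈ G.zeroSum R M ↔ ∀ e ∈ G.edges, ∑ v ∈ e, z v = 0 :=
  Iff.rfl

theorem const_mem_zeroSum (c : ZMod m) : (fun _ => c) ∈ G.zeroSum (ZMod m) (ZMod m) :=
  fun e he => by simp [G.uniform e he]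

def zeroSumCongr (f : M ≃ₗ[R] N) : G.zeroSum R M ≃ₗ[R] G.zeroSum R N where
  toFun z := ⟨f ∘ z, fun e he => by simp [← map_sum, z.2 e he]⟩
  invFun z := ⟨f.symm ∘ z, fun e he => by simp [← map_sum, z.2 e he]⟩
  map_add' _ _ := by ext; simp
  map_smul' _ _ := by ext; simp
  left_inv z := by ext; simp
  right_inv z := by ext; simp

def zeroSumPiEquiv (ι : Type*) : G.zeroSum R (ι → M) ≃ₗ[R] (ι → G.zeroSum R M) where
  toFun z i := ⟨fun v => z.1 v i, fun e he => by simpa using congrFun (z.2 e he) i⟩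
  invFun y := ⟨fun v i => (y i).1 v, fun e he => funext fun i => by simpa using (y i).2 e he⟩
  map_add' _ _ := rfl
  map_smul' _ _ := rfl
  left_inv _ := rfl
  right_inv _ := rfl

end Coefficients

end HG

section CartProd

variable {m : ℕ} {V₁ V₂ : Type} [DecidableEq V₁] [DecidableEq V₂] [Fintype V₁] [Fintype V₂]
  {R M : Type*} [Semiring R] [AddCommMonoid M] [Module R M] (G₁ : HG m V₁) (G₂ : HG m V₂)

theorem mem_zeroSum_cartProd {x : V₁ × V₂ → M} :
    x ∈ (cartProd G₁ G₂).zeroSum R M ↔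
      (∀ u, (fun v => x (u, v)) ∈ G₂.zeroSum R M) ∧
        ∀ v, (fun u => x (u, v)) ∈ G₁.zeroSum R M := by
  simp only [HG.mem_zeroSum, cartProd, Finset.mem_union, Finset.mem_biUnion, Finset.mem_image,
    Finset.mem_univ, true_and]
  constructor
  · intro h
    refine ⟨fun u e he => ?_, fun v e he => ?_⟩
    · simpa [Finset.sum_image] using h _ (Or.inl ⟨u, e, he, rfl⟩)
    · simpa [Finset.sum_image] using h _ (Or.inr ⟨v, e, he, rfl⟩)
  · rintro ⟨h₂, h₁⟩ _ (⟨u, e, he, rfl⟩ | ⟨v, e, he, rfl⟩)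
    · simpa [Finset.sum_image] using h₂ u e he
    · simpa [Finset.sum_image] using h₁ v e he

def zeroSumCartProdEquiv :
    (cartProd G₁ G₂).zeroSum R M ≃ₗ[R] G₁.zeroSum R (G₂.zeroSum R M) where
  toFun x := ⟨fun u => ⟨fun v => x.1 (u, v), ((mem_zeroSum_cartProd G₁ G₂).1 x.2).1 u⟩,
    fun e he => Subtype.ext <| funext fun v => by
      simpa using ((mem_zeroSum_cartProd G₁ G₂).1 x.2).2 v e he⟩
  invFun z := ⟨fun p => (z.1 p.1).1 p.2, (mem_zeroSum_cartProd G₁ G₂).2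
    ⟨fun u => (z.1 u).2, fun v e he => by
      simpa using congrFun (congrArg Subtype.val (z.2 e he)) v⟩⟩
  map_add' _ _ := rfl
  map_smul' _ _ := rfl
  left_inv _ := rfl
  right_inv _ := rfl

theorem finrank_zeroSum_cartProd (K : Type*) [Field K] :
    Module.finrank K ((cartProd G₁ G₂).zeroSum K K) =
      Module.finrank K (G₁.zeroSum K K) * Module.finrank K (G₂.zeroSum K K) := by
  let b := Module.finBasis K (G₂.zeroSum K K)
  rw [(zeroSumCartProdEquiv G₁ G₂).finrank_eq, (G₁.zeroSumCongr b.equivFun).finrank_eq,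
    (G₁.zeroSumPiEquiv _).finrank_eq, Module.finrank_pi_fintype]
  simp [mul_comm]

end CartProd

namespace HG

variable {m : ℕ} {V : Type} [DecidableEq V] [Fintype V] (G : HG m V)

theorem mulVec_inc_eq_zero_iff {x : V → ZMod m} :
    G.inc *ᵥ x = 0 ↔ x ∈ G.zeroSum (ZMod m) (ZMod m) := by
  simp only [mem_zeroSum, funext_iff, Subtype.forall, Pi.zero_apply]
  refine forall₂_congr fun e _ => ?_
  simp [inc, Matrix.mulVec, dotProduct, ite_mul, Finset.sum_ite_mem]

theorem ker_mulVecLin_inc : LinearMap.ker G.inc.mulVecLin = G.zeroSum (ZMod m) (ZMod m) :=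
  Submodule.ext fun _ => G.mulVec_inc_eq_zero_iff

variable [Fact m.Prime]

theorem finrank_zeroSum :
    Module.finrank (ZMod m) (G.zeroSum (ZMod m) (ZMod m)) = Fintype.card V - G.inc.rank := by
  have := LinearMap.finrank_range_add_finrank_ker G.inc.mulVecLin
  rw [ker_mulVecLin_inc, Module.finrank_fintype_fun_eq_card] at this
  rw [← this, Matrix.rank, Nat.add_sub_cancel_left]

theorem stabIndex_eq_pow (v₀ : V) :
    G.stabIndex v₀ = m ^ (Module.finrank (ZMod m) (G.zeroSum (ZMod m) (ZMod m)) - 1) := by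
  let ev := (LinearMap.proj v₀).comp (G.zeroSum (ZMod m) (ZMod m)).subtype
  have hev : Function.Surjective ev := fun c => ⟨⟨_, G.const_mem_zeroSum c⟩, rfl⟩
  have hker : G.stabIndex v₀ = Nat.card (LinearMap.ker ev) := Nat.card_congr
    { toFun x := ⟨⟨x.1, G.mulVec_inc_eq_zero_iff.1 x.2.1⟩, x.2.2⟩
      invFun x := ⟨x.1.1, G.mulVec_inc_eq_zero_iff.2 x.1.2, x.2⟩ }
  have := LinearMap.finrank_range_add_finrank_ker ev
  rw [LinearMap.range_eq_top.2 hev, finrank_top, Module.finrank_self] at this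
  rw [hker, Module.natCard_eq_pow_finrank (K := ZMod m), Nat.card_zmod, ← this,
    Nat.add_sub_cancel_left]

end HG

theorem stabIndex_cartProd_prime_general (m n₁ n₂ r₁ r₂ : ℕ) (hp : m.Prime)
    (G₁ : HG m (Fin n₁)) (G₂ : HG m (Fin n₂))
    (hr₁ : G₁.inc.rank = r₁) (hr₂ : G₂.inc.rank = r₂)
    (w : Fin n₁ × Fin n₂) :
    (cartProd G₁ G₂).stabIndex w = m ^ ((n₁ - r₁) * (n₂ - r₂) - 1) := by
  have : Fact m.Prime := ⟨hp⟩
  rw [HG.stabIndex_eq_pow, finrank_zeroSum_cartProd, G₁.finrank_zeroSum, G₂.finrank_zeroSum,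
    Fintype.card_fin, Fintype.card_fin, hr₁, hr₂]

/-- **Prime case.** When `m` is prime and the incidence matrices of connected `m`-uniform
hypergraphs `G₁`, `G₂` have ranks `r₁`, `r₂` over the field `ZMod m`, the stabilizing
index of the Cartesian product is `s(G₁ □ G₂) = m^{(n₁-r₁)(n₂-r₂)-1}`. -/
theorem stabIndex_cartProd_prime (m n₁ n₂ r₁ r₂ : ℕ) (hp : m.Prime)
    (hn₁ : 2 ≤ n₁) (hn₂ : 2 ≤ n₂)
    (G₁ : HG m (Fin n₁)) (G₂ : HG m (Fin n₂))
    (h₁ : G₁.Connected) (h₂ : G₂.Connected)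
    (hr₁ : G₁.inc.rank = r₁) (hr₂ : G₂.inc.rank = r₂)
    (w : Fin n₁ × Fin n₂) :
    (cartProd G₁ G₂).stabIndex w = m ^ ((n₁ - r₁) * (n₂ - r₂) - 1) :=
  stabIndex_cartProd_prime_general m n₁ n₂ r₁ r₂ hp G₁ G₂ hr₁ hr₂ w
end

section
/- Let G₁, G₂ be connected m-uniform hypergraphs. Then c(G₁ □ G₂) = gcd(c(G₁), c(G₂)), where c(H) is the largest divisor ℓ of m such that In(H)x = (m/ℓ)𝟙 has a solution over ℤ/mℤ, and □ is the Cartesian product of m-uniform hypergraphs. -/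
/-!
The indices `ℓ` admitting an `(m,ℓ)`-coloring are closed under taking divisors (rescale the
coloring). Since the attainable edge sums form a subgroup of `ℤ/mℤ`, for two indices `ℓ`, `ℓ'`
the sum `g = gcd(m/ℓ, m/ℓ')` is attainable by Bézout, so `m/g`, a common multiple of `ℓ` and `ℓ'`,
is an index too; hence the indices are exactly the divisors of the cyclic index.
A coloring of `G₁ □ G₂` restricts to colorings of fibre copies of `G₁` and `G₂`; conversely
colorings `x₁`, `x₂` of the factors with the same edge sum give `x₁ u + x₂ v`, since on each
edge of the product one summand is constant and is added `m ≡ 0` times. So the indices of the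
product are the common indices of the factors, the divisors of `gcd(c(G₁), c(G₂))`.
-/

open Matrix

theorem AddSubgroup.natCast_gcd_mem {R : Type*} [Ring R] (H : AddSubgroup R) {a b : ℕ}
    (ha : (a : R) ∈ H) (hb : (b : R) ∈ H) : (Nat.gcd a b : R) ∈ H := by
  have hbezout : (Nat.gcd a b : R) = Nat.gcdA a b • (a : R) + Nat.gcdB a b • (b : R) := by
    rw [← Int.cast_natCast, Nat.gcd_eq_gcd_ab]
    simp [zsmul_eq_mul, mul_comm]
  rw [hbezout]
  exact add_mem (zsmul_mem ha _) (zsmul_mem hb _)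

theorem Nat.dvd_div_of_dvd_div_of_dvd {a g m : ℕ} (ha : a ∣ m) (hg : g ∣ m / a) : a ∣ m / g :=
  Nat.dvd_div_of_mul_dvd (mul_comm a g ▸ Nat.mul_dvd_of_dvd_div ha hg)

namespace HG

variable {m : ℕ} {V : Type}

def edgeSums (G : HG m V) : AddSubgroup (ZMod m) where
  carrier := {k | ∃ x : V → ZMod m, ∀ e ∈ G.edges, ∑ v ∈ e, x v = k}
  zero_mem' := ⟨0, fun e _ => by simp⟩
  add_mem' := by
    rintro _ _ ⟨x, hx⟩ ⟨y, hy⟩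
    exact ⟨x + y, fun e he => by simp [Finset.sum_add_distrib, hx e he, hy e he]⟩
  neg_mem' := by
    rintro _ ⟨x, hx⟩
    exact ⟨-x, fun e he => by simp [hx e he]⟩

def coloringIndices (G : HG m V) : Set ℕ :=
  {ℓ | ℓ ∣ m ∧ ((m / ℓ : ℕ) : ZMod m) ∈ G.edgeSums}

theorem one_mem_coloringIndices (G : HG m V) : 1 ∈ G.coloringIndices :=
  ⟨one_dvd m, by simp [zero_mem]⟩

theorem bddAbove_coloringIndices (hm : m ≠ 0) (G : HG m V) : BddAbove G.coloringIndices :=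
  ⟨m, fun _ hℓ => Nat.le_of_dvd (Nat.pos_of_ne_zero hm) hℓ.1⟩

theorem cyclicIndex_mem_coloringIndices (hm : m ≠ 0) (G : HG m V) :
    G.cyclicIndex ∈ G.coloringIndices :=
  Nat.sSup_mem ⟨1, G.one_mem_coloringIndices⟩ (G.bddAbove_coloringIndices hm)

theorem mem_coloringIndices_of_dvd {G : HG m V} {ℓ d : ℕ}
    (hℓ : ℓ ∈ G.coloringIndices) (hd : d ∣ ℓ) : d ∈ G.coloringIndices := by
  obtain ⟨hℓm, hsum⟩ := hℓ
  obtain ⟨n, hn⟩ := Nat.div_dvd_div_left hℓm hd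
  refine ⟨hd.trans hℓm, ?_⟩
  rw [hn, Nat.cast_mul, ← nsmul_eq_mul']
  exact nsmul_mem hsum n

theorem sum_const_eq_zero_of_mem_edges (G : HG m V) {e : Finset V} (he : e ∈ G.edges)
    (a : ZMod m) : ∑ _v ∈ e, a = 0 := by
  rw [Finset.sum_const, G.uniform e he, nsmul_eq_mul, ZMod.natCast_self, zero_mul]

theorem mem_coloringIndices_iff_dvd_cyclicIndex (hm : m ≠ 0) {G : HG m V} {ℓ : ℕ} :
    ℓ ∈ G.coloringIndices ↔ ℓ ∣ G.cyclicIndex := by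
  have hc := G.cyclicIndex_mem_coloringIndices hm
  refine ⟨fun hℓ => ?_, fun h => mem_coloringIndices_of_dvd hc h⟩
  set c := G.cyclicIndex
  -- By Bézout `g` is an edge sum, so `m / g` is admissible; it is a multiple of both `ℓ` and
  -- `c`, and maximality of `c` forces `m / g = c`.
  set g := Nat.gcd (m / ℓ) (m / c)
  have hgm : g ∣ m := (Nat.gcd_dvd_left _ _).trans (Nat.div_dvd_of_dvd hℓ.1)
  have hmg : m / g ∈ G.coloringIndices := by
    refine ⟨Nat.div_dvd_of_dvd hgm, ?_⟩
    rw [Nat.div_div_self hgm hm]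
    exact G.edgeSums.natCast_gcd_mem hℓ.2 hc.2
  have hcmg : c ∣ m / g := Nat.dvd_div_of_dvd_div_of_dvd hc.1 (Nat.gcd_dvd_right _ _)
  have : m / g = c := le_antisymm (le_csSup (G.bddAbove_coloringIndices hm) hmg)
    (Nat.le_of_dvd (Nat.pos_of_dvd_of_pos hmg.1 (Nat.pos_of_ne_zero hm)) hcmg)
  exact this ▸ Nat.dvd_div_of_dvd_div_of_dvd hℓ.1 (Nat.gcd_dvd_left _ _)

section cartProd

variable {V₁ V₂ : Type} [DecidableEq V₁] [DecidableEq V₂] [Fintype V₁] [Fintype V₂]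

theorem mem_cartProd_edges {G₁ : HG m V₁} {G₂ : HG m V₂} {e : Finset (V₁ × V₂)} :
    e ∈ (cartProd G₁ G₂).edges ↔
      (∃ u, ∃ f ∈ G₂.edges, f.image (Prod.mk u) = e) ∨
        ∃ v, ∃ f ∈ G₁.edges, f.image (fun u => (u, v)) = e := by
  simp [cartProd]

theorem edgeSums_cartProd [Nonempty V₁] [Nonempty V₂] (G₁ : HG m V₁) (G₂ : HG m V₂) :
    (cartProd G₁ G₂).edgeSums = G₁.edgeSums ⊓ G₂.edgeSums := by
  ext k
  rw [AddSubgroup.mem_inf]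
  constructor
  · rintro ⟨x, hx⟩
    obtain ⟨u₀⟩ := ‹Nonempty V₁›
    obtain ⟨v₀⟩ := ‹Nonempty V₂›
    refine ⟨⟨fun u => x (u, v₀), fun f hf => ?_⟩, ⟨fun v => x (u₀, v), fun f hf => ?_⟩⟩
    · rw [← hx _ (mem_cartProd_edges.2 (.inr ⟨v₀, f, hf, rfl⟩)),
        Finset.sum_image fun _ _ _ _ h => Prod.mk_left_injective v₀ h]
    · rw [← hx _ (mem_cartProd_edges.2 (.inl ⟨u₀, f, hf, rfl⟩)),
        Finset.sum_image fun _ _ _ _ h => Prod.mk_right_injective u₀ h]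
  · rintro ⟨⟨x₁, hx₁⟩, ⟨x₂, hx₂⟩⟩
    refine ⟨fun p => x₁ p.1 + x₂ p.2, fun e he => ?_⟩
    obtain ⟨u, f, hf, rfl⟩ | ⟨v, f, hf, rfl⟩ := mem_cartProd_edges.1 he
    · rw [Finset.sum_image fun _ _ _ _ h => Prod.mk_right_injective u h,
        Finset.sum_add_distrib]
      dsimp only
      rw [G₂.sum_const_eq_zero_of_mem_edges hf, hx₂ f hf, zero_add]
    · rw [Finset.sum_image fun _ _ _ _ h => Prod.mk_left_injective v h,
        Finset.sum_add_distrib]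
      dsimp only
      rw [G₁.sum_const_eq_zero_of_mem_edges hf, hx₁ f hf, add_zero]

theorem coloringIndices_cartProd [Nonempty V₁] [Nonempty V₂] (G₁ : HG m V₁) (G₂ : HG m V₂) :
    (cartProd G₁ G₂).coloringIndices = G₁.coloringIndices ∩ G₂.coloringIndices := by
  ext ℓ
  simp only [coloringIndices, edgeSums_cartProd, AddSubgroup.mem_inf, Set.mem_inter_iff,
    Set.mem_ofPred_eq]
  tauto

end cartProd

end HG

theorem cyclicIndex_cartProd_general (m : ℕ) (hm : 2 ≤ m) {V₁ V₂ : Type}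
    [DecidableEq V₁] [Fintype V₁] [DecidableEq V₂] [Fintype V₂]
    (G₁ : HG m V₁) (G₂ : HG m V₂)
    (hn₁ : 2 ≤ Fintype.card V₁) (hn₂ : 2 ≤ Fintype.card V₂) :
    (cartProd G₁ G₂).cyclicIndex = Nat.gcd G₁.cyclicIndex G₂.cyclicIndex := by
  have hm0 : m ≠ 0 := by omega
  have : Nonempty V₁ := Fintype.card_pos_iff.mp (by omega)
  have : Nonempty V₂ := Fintype.card_pos_iff.mp (by omega)
  refine Nat.dvd_left_iff_eq.mp fun ℓ => ?_
  simp only [Nat.dvd_gcd_iff, ← HG.mem_coloringIndices_iff_dvd_cyclicIndex hm0,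
    HG.coloringIndices_cartProd, Set.mem_inter_iff]

/-- **Cyclic index of a Cartesian product.** For connected `m`-uniform hypergraphs `G₁`,
`G₂`, we have `c(G₁ □ G₂) = gcd(c(G₁), c(G₂))`. -/
theorem cyclicIndex_cartProd (m : ℕ) (hm : 2 ≤ m) {V₁ V₂ : Type}
    [DecidableEq V₁] [Fintype V₁] [DecidableEq V₂] [Fintype V₂]
    (G₁ : HG m V₁) (G₂ : HG m V₂)
    (h₁ : G₁.Connected) (h₂ : G₂.Connected)
    (hn₁ : 2 ≤ Fintype.card V₁) (hn₂ : 2 ≤ Fintype.card V₂) :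
    (cartProd G₁ G₂).cyclicIndex = Nat.gcd G₁.cyclicIndex G₂.cyclicIndex :=
  cyclicIndex_cartProd_general m hm G₁ G₂ hn₁ hn₂
end
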